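/- Let G be a Garside group of finite type and x, α ∈ G with inf(x^α) ≤ inf(x) and sup(x^α) ≥ sup(x). If α is positive (α ∈ P), then the transport α^{(1)} = 𝔭(x)⁻¹ α 𝔭(x^α) is positive. -/

import Mathlib

/-!
Write `y = x^α`, so that `x α = α y`. As `inf y ≤ inf x`, the element `x Δ^{-inf x}` is a prefix
of `x Δ^{-inf x} · Δ^{inf x} α Δ^{-inf y} = α y Δ^{-inf y}`; also `Δ ≼ α Δ`. Meeting the two gives
`ι(x) ≼ α ι(y)`. Since `inf x⁻¹ = -sup x`, the hypothesis on `sup` lets the same argument give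
`ι(x⁻¹) ≼ α ι(y⁻¹)`, and meeting once more yields `𝔭(x) ≼ α 𝔭(y)`.

The identity `inf x⁻¹ = -sup x` needs conjugation by `Δ` to preserve `P` in both directions, while
only `Δ⁻¹ P Δ ⊆ P` is an axiom. The reverse inclusion holds because conjugation by `Δ` maps the
finitely many simples injectively into themselves, so some power `Δ^N` commutes with all simples,
hence is central as they generate `G`.
-/

namespace GarsidePaper

/-- A Garside structure of finite type on a group `G`: a positive submonoid `P` with
`P ∩ P⁻¹ = {1}`, a Garside element `Δ ∈ P`, the prefix order `a ≼ b ↔ a⁻¹b ∈ P`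
a lattice order (with meet `wedge` and join `vee`), the simple elements `[1,Δ]`
generating `G` and being finite, `Δ⁻¹PΔ = P`, a finite norm on positive elements,
and the infimum and supremum functions `inf`, `sup` characterised by
`Δ^(inf x) ≼ x ≼ Δ^(sup x)` with `inf x` maximal and `sup x` minimal. -/
structure Garside (G : Type*) [Group G] where
  P : Submonoid G
  Δ : G
  purity : ∀ a : G, a ∈ P → a⁻¹ ∈ P → a = 1
  delta_mem : Δ ∈ P
  wedge : G → G → G
  vee : G → G → G
  wedge_le_left : ∀ a b : G, (wedge a b)⁻¹ * a ∈ P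
  wedge_le_right : ∀ a b : G, (wedge a b)⁻¹ * b ∈ P
  le_wedge : ∀ a b c : G, c⁻¹ * a ∈ P → c⁻¹ * b ∈ P → c⁻¹ * wedge a b ∈ P
  le_vee_left : ∀ a b : G, a⁻¹ * vee a b ∈ P
  le_vee_right : ∀ a b : G, b⁻¹ * vee a b ∈ P
  vee_le : ∀ a b c : G, a⁻¹ * c ∈ P → b⁻¹ * c ∈ P → (vee a b)⁻¹ * c ∈ P
  simples_generate : Subgroup.closure {a : G | a ∈ P ∧ a⁻¹ * Δ ∈ P} = (⊤ : Subgroup G)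
  conj_pos : ∀ a : G, a ∈ P → Δ⁻¹ * a * Δ ∈ P
  norm : G → ℕ
  norm_exists : ∀ x : G, x ∈ P → x ≠ 1 →
    ∃ l : List G, (∀ s ∈ l, s ∈ P ∧ s ≠ 1) ∧ l.prod = x ∧ l.length = norm x
  norm_max : ∀ x : G, x ∈ P → x ≠ 1 →
    ∀ l : List G, (∀ s ∈ l, s ∈ P ∧ s ≠ 1) → l.prod = x → l.length ≤ norm x
  simples_finite : Set.Finite {a : G | a ∈ P ∧ a⁻¹ * Δ ∈ P}
  inf : G → ℤ
  sup : G → ℤ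
  inf_le : ∀ x : G, (Δ ^ inf x)⁻¹ * x ∈ P
  inf_max : ∀ (x : G) (p : ℤ), (Δ ^ p)⁻¹ * x ∈ P → p ≤ inf x
  le_sup : ∀ x : G, x⁻¹ * Δ ^ sup x ∈ P
  sup_min : ∀ (x : G) (q : ℤ), x⁻¹ * Δ ^ q ∈ P → sup x ≤ q

namespace Garside

variable {G : Type*} [Group G]

/-- The prefix order `a ≼ b`. -/
def le (S : Garside G) (a b : G) : Prop := a⁻¹ * b ∈ S.P

/-- The canonical length `ℓ(x) = sup(x) - inf(x)`. -/
def len (S : Garside G) (x : G) : ℤ := S.sup x - S.inf x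

/-- The initial factor `ι(x) = (x Δ^(-inf x)) ∧ Δ`. -/
def iota (S : Garside G) (x : G) : G := S.wedge (x * S.Δ ^ (-S.inf x)) S.Δ

/-- The preferred prefix `𝔭(x) = ι(x) ∧ ι(x⁻¹)`. -/
def pp (S : Garside G) (x : G) : G := S.wedge (S.iota x) (S.iota x⁻¹)

/-- Cyclic sliding `𝔰(x) = 𝔭(x)⁻¹ x 𝔭(x)`. -/
def sl (S : Garside G) (x : G) : G := (S.pp x)⁻¹ * x * S.pp x

/-- The final factor `φ(x) = (Δ^(sup x - 1) ∧ x)⁻¹ x`. -/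
def phi (S : Garside G) (x : G) : G := (S.wedge (S.Δ ^ (S.sup x - 1)) x)⁻¹ * x

/-- Conjugation by `Δ`: `τ(x) = Δ⁻¹ x Δ`. -/
def tau (S : Garside G) (x : G) : G := S.Δ⁻¹ * x * S.Δ

/-- Cycling `c(x) = ι(x)⁻¹ x ι(x)`. -/
def cyc (S : Garside G) (x : G) : G := (S.iota x)⁻¹ * x * S.iota x

/-- Decycling `d(x) = φ(x) x φ(x)⁻¹`. -/
def dec (S : Garside G) (x : G) : G := S.phi x * x * (S.phi x)⁻¹

/-- The transport `α^{(1)} = 𝔭(x)⁻¹ α 𝔭(x^α)` of `α` at `x`. -/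
def transport (S : Garside G) (x α : G) : G := (S.pp x)⁻¹ * α * S.pp (α⁻¹ * x * α)

/-- The iterated transport: `itTransport x i α = α^{(i)}`, the transport of `α^{(i-1)}`
at `𝔰^{i-1}(x)`, with `α^{(0)} = α`. -/
def itTransport (S : Garside G) (x : G) : ℕ → G → G
  | 0, α => α
  | i + 1, α => S.transport ((S.sl)^[i] x) (S.itTransport x i α)

/-- `𝔓_i(x) = 𝔭(x) 𝔭(𝔰(x)) ⋯ 𝔭(𝔰^{i-1}(x))`, with `𝔓₀(x) = 1`. -/
def PP (S : Garside G) (x : G) : ℕ → G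
  | 0 => 1
  | i + 1 => S.PP x i * S.pp ((S.sl)^[i] x)

/-- The summit set `SS(x)`. -/
def SS (S : Garside G) (x : G) : Set G :=
  {y | IsConj x y ∧ ∀ z : G, IsConj x z → S.inf z ≤ S.inf y}

/-- The super summit set `SSS(x)`. -/
def SSS (S : Garside G) (x : G) : Set G :=
  {y | IsConj x y ∧ (∀ z : G, IsConj x z → S.inf z ≤ S.inf y) ∧
       (∀ z : G, IsConj x z → S.sup y ≤ S.sup z)}

/-- The ultra summit set `USS(x)`. -/
def USS (S : Garside G) (x : G) : Set G :=
  {y | y ∈ S.SSS x ∧ ∃ m : ℕ, 1 ≤ m ∧ (S.cyc)^[m] y = y}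

/-- The reduced super summit set `RSSS(x)`. -/
def RSSS (S : Garside G) (x : G) : Set G :=
  {y | IsConj x y ∧ (∃ m : ℕ, 1 ≤ m ∧ (S.cyc)^[m] y = y) ∧
       (∃ n : ℕ, 1 ≤ n ∧ (S.dec)^[n] y = y)}

/-- The set of sliding circuits `SC(x)`. -/
def SC (S : Garside G) (x : G) : Set G :=
  {y | IsConj x y ∧ ∃ m : ℕ, 1 ≤ m ∧ (S.sl)^[m] y = y}

end Garside

namespace Garside

variable {G : Type*} [Group G] (S : Garside G)

def simples : Set G := {a : G | a ∈ S.P ∧ a⁻¹ * S.Δ ∈ S.P}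

section PrefixOrder

variable {S}

theorem le.trans {a b c : G} (hab : S.le a b) (hbc : S.le b c) : S.le a c := by
  simpa [le, mul_assoc] using S.P.mul_mem hab hbc

theorem le_mul_of_mem (a : G) {b : G} (hb : b ∈ S.P) : S.le a (a * b) := by
  simpa [le] using hb

theorem le_mul_iff_inv_mul_le {a b g : G} : S.le a (g * b) ↔ S.le (g⁻¹ * a) b := by
  simp [le, mul_assoc]

theorem le_mul_wedge {a b c g : G} (ha : S.le c (g * a)) (hb : S.le c (g * b)) :
    S.le c (g * S.wedge a b) :=
  le_mul_iff_inv_mul_le.2 <|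
    S.le_wedge a b _ (le_mul_iff_inv_mul_le.1 ha) (le_mul_iff_inv_mul_le.1 hb)

end PrefixOrder

theorem zpow_delta_mem_of_nonneg {m : ℤ} (hm : 0 ≤ m) : S.Δ ^ m ∈ S.P := by
  lift m to ℕ using hm
  simpa using pow_mem S.delta_mem m

theorem inv_pow_delta_mul_mul_pow_delta_mem (n : ℕ) {a : G} (ha : a ∈ S.P) :
    (S.Δ ^ n)⁻¹ * a * S.Δ ^ n ∈ S.P := by
  induction n with
  | zero => simpa using ha
  | succ n ih => simpa [pow_succ, mul_assoc] using S.conj_pos _ ih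

theorem inv_pow_delta_mul_mul_pow_delta_mem_simples (n : ℕ) {s : G} (hs : s ∈ S.simples) :
    (S.Δ ^ n)⁻¹ * s * S.Δ ^ n ∈ S.simples := by
  refine ⟨S.inv_pow_delta_mul_mul_pow_delta_mem n hs.1, ?_⟩
  convert S.inv_pow_delta_mul_mul_pow_delta_mem n hs.2 using 1
  group

theorem exists_pow_delta_commute_simples :
    ∃ N : ℕ, 0 < N ∧ ∀ s ∈ S.simples, Commute (S.Δ ^ N) s := by
  have : Finite S.simples := S.simples_finite.to_subtype
  let τ : ℕ → S.simples → S.simples := fun n s =>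
    ⟨(S.Δ ^ n)⁻¹ * s * S.Δ ^ n, S.inv_pow_delta_mul_mul_pow_delta_mem_simples n s.2⟩
  obtain ⟨i, j, hne, hij⟩ := Finite.exists_ne_map_eq_of_infinite τ
  wlog hlt : i < j generalizing i j
  · exact this j i hne.symm hij.symm (by omega)
  obtain ⟨N, rfl⟩ := Nat.exists_eq_add_of_lt hlt
  refine ⟨N + 1, N.succ_pos, fun s hs => ?_⟩
  have h : (S.Δ ^ i)⁻¹ * s * S.Δ ^ i = (S.Δ ^ (i + N + 1))⁻¹ * s * S.Δ ^ (i + N + 1) :=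
    congrArg Subtype.val (congrFun hij ⟨s, hs⟩)
  rw [show i + N + 1 = N + 1 + i by omega, pow_add] at h
  have hfix : (S.Δ ^ (N + 1))⁻¹ * (s * S.Δ ^ (N + 1)) = s := by
    simpa [mul_assoc] using (congrArg (fun g => S.Δ ^ i * g * (S.Δ ^ i)⁻¹) h).symm
  exact (inv_mul_eq_iff_eq_mul.mp hfix).symm

theorem exists_pow_delta_mem_center : ∃ N : ℕ, 0 < N ∧ S.Δ ^ N ∈ Subgroup.center G := by
  obtain ⟨N, hN, hcomm⟩ := S.exists_pow_delta_commute_simples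
  have hle : Subgroup.closure S.simples ≤ Subgroup.centralizer {S.Δ ^ N} :=
    (Subgroup.closure_le _).2 fun s hs =>
      Subgroup.mem_centralizer_singleton_iff.2 (hcomm s hs).eq.symm
  refine ⟨N, hN, Subgroup.mem_center_iff.2 fun g => ?_⟩
  have hg : g ∈ Subgroup.centralizer {S.Δ ^ N} := hle (S.simples_generate ▸ Subgroup.mem_top g)
  exact Subgroup.mem_centralizer_singleton_iff.1 hg

theorem delta_mul_mul_inv_delta_mem {a : G} (ha : a ∈ S.P) : S.Δ * a * S.Δ⁻¹ ∈ S.P := by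
  obtain ⟨N, hN, hcenter⟩ := S.exists_pow_delta_mem_center
  obtain ⟨M, rfl⟩ : ∃ M, N = M + 1 := ⟨N - 1, by omega⟩
  have hcomm : S.Δ ^ (M + 1) * a = a * S.Δ ^ (M + 1) :=
    (Subgroup.mem_center_iff.1 hcenter a).symm
  have heq : S.Δ * a * S.Δ⁻¹ = (S.Δ ^ M)⁻¹ * a * S.Δ ^ M :=
    calc S.Δ * a * S.Δ⁻¹ = (S.Δ ^ M)⁻¹ * (S.Δ ^ (M + 1) * a) * S.Δ⁻¹ := by group
      _ = (S.Δ ^ M)⁻¹ * a * S.Δ ^ M := by rw [hcomm]; group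
  exact heq ▸ S.inv_pow_delta_mul_mul_pow_delta_mem M ha

theorem zpow_delta_mul_mul_inv_mem (m : ℤ) {a : G} (ha : a ∈ S.P) :
    S.Δ ^ m * a * (S.Δ ^ m)⁻¹ ∈ S.P := by
  induction m using Int.induction_on with
  | zero => simpa using ha
  | succ n ih =>
    convert S.delta_mul_mul_inv_delta_mem ih using 1
    group
  | pred n ih =>
    convert S.conj_pos _ ih using 1
    group

theorem inf_inv (x : G) : S.inf x⁻¹ = -S.sup x := by
  refine le_antisymm ?_ (S.inf_max _ _ ?_)
  · refine le_neg.2 (S.sup_min _ _ ?_)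
    convert S.zpow_delta_mul_mul_inv_mem (S.inf x⁻¹) (S.inf_le x⁻¹) using 1
    group
  · convert S.zpow_delta_mul_mul_inv_mem (S.sup x) (S.le_sup x) using 1
    group

theorem zpow_delta_mul_mul_inv_zpow_delta_mem {α : G} (hα : α ∈ S.P) {p q : ℤ} (hqp : q ≤ p) :
    S.Δ ^ p * α * (S.Δ ^ q)⁻¹ ∈ S.P := by
  convert S.P.mul_mem (S.zpow_delta_mul_mul_inv_mem p hα)
    (S.zpow_delta_mem_of_nonneg (sub_nonneg.2 hqp)) using 1
  group

theorem iota_le_mul_iota {z w α : G} (hα : α ∈ S.P) (hzw : z * α = α * w)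
    (hinf : S.inf w ≤ S.inf z) : S.le (S.iota z) (α * S.iota w) := by
  refine le_mul_wedge ?_ ?_
  · have hle : S.le (z * S.Δ ^ (-S.inf z)) (α * (w * S.Δ ^ (-S.inf w))) := by
      convert le_mul_of_mem _ (S.zpow_delta_mul_mul_inv_zpow_delta_mem hα hinf) using 1
      rw [← mul_assoc α, ← hzw]
      group
    exact le.trans (S.wedge_le_left _ _) hle
  · have hle : S.le S.Δ (α * S.Δ) := by
      simpa [mul_assoc] using le_mul_of_mem S.Δ (S.conj_pos α hα)
    exact le.trans (S.wedge_le_right _ _) hle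

end Garside

open Garside in
theorem statement8 {G : Type*} [Group G] (S : Garside G) (x α : G)
    (h1 : S.inf (α⁻¹ * x * α) ≤ S.inf x) (h2 : S.sup x ≤ S.sup (α⁻¹ * x * α))
    (hα : α ∈ S.P) : S.transport x α ∈ S.P := by
  set y := α⁻¹ * x * α with hy_def
  have hy : S.le (S.iota x) (α * S.iota y) :=
    S.iota_le_mul_iota hα (by rw [hy_def]; group) h1
  have hy_inv : S.le (S.iota x⁻¹) (α * S.iota y⁻¹) :=
    S.iota_le_mul_iota hα (by rw [hy_def]; group) (by rw [S.inf_inv, S.inf_inv]; omega)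
  have hpp : S.le (S.pp x) (α * S.pp y) :=
    le_mul_wedge (le.trans (S.wedge_le_left _ _) hy) (le.trans (S.wedge_le_right _ _) hy_inv)
  show (S.pp x)⁻¹ * α * S.pp y ∈ S.P
  rwa [mul_assoc]

end GarsidePaper
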